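/- arXiv:2511.07038 — 7 statements merged into one kernel-verified Lean document; each statement's English description precedes it below -/
import Mathlib

section
/- Let m, k, r be positive reals and define h(x) = (1-x)^m · (r - x(m+k+r))/(r - x(k+r)) for x ∈ [0,1] \ {r/(r+k)}. Then h is strictly decreasing on [0, r/(r+m+k)) and strictly decreasing on (r/(r+k), 1]. -/
open Real Set

private lemma h_deriv_neg (m k r : ℝ) (hm : 0 < m) (hr : 0 < r) {x : ℝ} (hx1 : x < 1)
    (hd : r - x * (k + r) ≠ 0)
    (hQ : 0 < (r - x * (m + k + r)) / (r - x * (k + r))) :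
    deriv (fun x : ℝ => (1 - x) ^ m * ((r - x * (m + k + r)) / (r - x * (k + r)))) x < 0 := by
  have h1x : (0:ℝ) < 1 - x := by linarith
  have h1 : HasDerivAt (fun x : ℝ => 1 - x) (-1) x := (hasDerivAt_id x).const_sub 1
  have h2 : HasDerivAt (fun y : ℝ => y ^ m) (m * (1 - x) ^ (m - 1)) (1 - x) :=
    Real.hasDerivAt_rpow_const (Or.inl (ne_of_gt h1x))
  have hg1 : HasDerivAt (fun x : ℝ => (1 - x) ^ m) (m * (1 - x) ^ (m - 1) * (-1)) x :=
    h2.comp x h1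
  have hnum : HasDerivAt (fun x : ℝ => r - x * (m + k + r)) (-(m + k + r)) x := by
    simpa using ((hasDerivAt_id x).mul_const (m + k + r)).const_sub r
  have hden : HasDerivAt (fun x : ℝ => r - x * (k + r)) (-(k + r)) x := by
    simpa using ((hasDerivAt_id x).mul_const (k + r)).const_sub r
  have hg2 : HasDerivAt (fun x : ℝ => (r - x * (m + k + r)) / (r - x * (k + r)))
      ((-(m + k + r) * (r - x * (k + r)) - (r - x * (m + k + r)) * (-(k + r))) /
        (r - x * (k + r)) ^ 2) x := hnum.div hden hd
  have hf := hg1.mul hg2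
  rw [show deriv (fun x : ℝ => (1 - x) ^ m * ((r - x * (m + k + r)) / (r - x * (k + r)))) x = _ from hf.deriv]
  have hnum_eq : (-(m + k + r) * (r - x * (k + r)) - (r - x * (m + k + r)) * (-(k + r)))
      = -(m * r) := by ring
  rw [hnum_eq]
  have hP : (0:ℝ) < (1 - x) ^ (m - 1) := Real.rpow_pos_of_pos h1x _
  have hS : (0:ℝ) < (r - x * (k + r)) ^ 2 :=
    lt_of_le_of_ne (sq_nonneg _) (Ne.symm (pow_ne_zero 2 hd))
  have hpow : (1 - x) ^ m = (1 - x) ^ (m - 1) * (1 - x) := by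
    rw [← Real.rpow_add_one (ne_of_gt h1x) (m - 1), sub_add_cancel]
  rw [hpow]
  have t1 : 0 < m * (1 - x) ^ (m - 1) *
      ((r - x * (m + k + r)) / (r - x * (k + r))) := by
    apply mul_pos (mul_pos hm hP) hQ
  have t2 : 0 < (1 - x) ^ (m - 1) * (1 - x) * (m * r) / (r - x * (k + r)) ^ 2 := by
    apply div_pos (mul_pos (mul_pos hP h1x) (mul_pos hm hr)) hS
  rw [show m * (1 - x) ^ (m - 1) * (-1) * ((r - x * (m + k + r)) / (r - x * (k + r))) +
      (1 - x) ^ (m - 1) * (1 - x) * (-(m * r) / (r - x * (k + r)) ^ 2)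
      = -(m * (1 - x) ^ (m - 1) * ((r - x * (m + k + r)) / (r - x * (k + r)))) -
        (1 - x) ^ (m - 1) * (1 - x) * (m * r) / (r - x * (k + r)) ^ 2 from by ring]
  linarith

private lemma h_cont (m k r : ℝ) (hm : 0 < m) {s : Set ℝ}
    (hs : ∀ x ∈ s, r - x * (k + r) ≠ 0) :
    ContinuousOn (fun x : ℝ => (1 - x) ^ m * ((r - x * (m + k + r)) / (r - x * (k + r)))) s := by
  have hc : Continuous (fun x : ℝ => (1 - x) ^ m) := by
    rw [continuous_iff_continuousAt]
    intro x
    exact (Real.continuousAt_rpow_const _ _ (Or.inr hm.le)).comp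
      ((continuous_const.sub continuous_id).continuousAt)
  exact hc.continuousOn.mul (ContinuousOn.div (by fun_prop) (by fun_prop) hs)

theorem h_strict_anti (m k r : ℝ) (hm : 0 < m) (hk : 0 < k) (hr : 0 < r) :
    StrictAntiOn (fun x : ℝ => (1 - x) ^ m * ((r - x * (m + k + r)) / (r - x * (k + r))))
      (Set.Ico 0 (r / (r + m + k))) ∧
    StrictAntiOn (fun x : ℝ => (1 - x) ^ m * ((r - x * (m + k + r)) / (r - x * (k + r))))
      (Set.Ioc (r / (r + k)) 1) := by
  have hA : (0:ℝ) < r + m + k := by linarith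
  have hB : (0:ℝ) < r + k := by linarith
  have hrA : r / (r + m + k) < 1 := by
    rw [div_lt_one hA]; linarith
  constructor
  · apply StrictAntiOn.mono (s := Set.Ico 0 (r / (r + m + k)))
      (strictAntiOn_of_deriv_neg (convex_Ico _ _) ?_ ?_) (le_refl _)
    · apply h_cont m k r hm
      intro x hx
      have hx0 : 0 ≤ x := hx.1
      have hx2 : x < r / (r + m + k) := hx.2
      have : x * (r + m + k) < r := (lt_div_iff₀ hA).mp hx2
      have : x * (k + r) < r := by nlinarith
      linarith
    · intro x hx
      rw [interior_Ico] at hx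
      have hx0 : 0 < x := hx.1
      have hx2 : x < r / (r + m + k) := hx.2
      have hxA : x * (r + m + k) < r := (lt_div_iff₀ hA).mp hx2
      have hx1 : x < 1 := lt_trans hx2 hrA
      have hdpos : 0 < r - x * (k + r) := by nlinarith
      have hnpos : 0 < r - x * (m + k + r) := by nlinarith
      exact h_deriv_neg m k r hm hr hx1 (ne_of_gt hdpos) (div_pos hnpos hdpos)
  · apply StrictAntiOn.mono (s := Set.Ioc (r / (r + k)) 1)
      (strictAntiOn_of_deriv_neg (convex_Ioc _ _) ?_ ?_) (le_refl _)
    · apply h_cont m k r hm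
      intro x hx
      have hx1 : r / (r + k) < x := hx.1
      have : r < x * (r + k) := (div_lt_iff₀ hB).mp hx1
      have : x * (k + r) > r := by nlinarith
      linarith
    · intro x hx
      rw [interior_Ioc] at hx
      have hx1 : r / (r + k) < x := hx.1
      have hx2 : x < 1 := hx.2
      have hxB : r < x * (r + k) := (div_lt_iff₀ hB).mp hx1
      have hdneg : r - x * (k + r) < 0 := by nlinarith
      have hnneg : r - x * (m + k + r) < 0 := by nlinarith
      exact h_deriv_neg m k r hm hr hx2 (ne_of_lt hdneg)
        (div_pos_of_neg_of_neg hnneg hdneg)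
end

section
/- Let m, k, r > 0 with m ≥ 1 and h(x) = (1-x)^m (r - x(m+k+r))/(r - x(k+r)). If x ∈ (r/(r+m+k), r/(r+k)) satisfies h'(x) = 0, then x = (2r² + (2k+m+1)r ± √(r²(m-1)² - 4rk² - 4kr(m+r))) / (2(r+k)(r+m+k)). -/
open Real Set

theorem h_stationary_points (m k r : ℝ) (hm : 1 ≤ m) (hk : 0 < k) (hr : 0 < r)
    (hD : 0 ≤ r ^ 2 * (m - 1) ^ 2 - 4 * r * k ^ 2 - 4 * k * r * (m + r))
    (x : ℝ) (hx : x ∈ Set.Ioo (r / (r + m + k)) (r / (r + k)))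
    (hderiv : deriv (fun x : ℝ => (1 - x) ^ m * ((r - x * (m + k + r)) / (r - x * (k + r)))) x = 0) :
    x = (2 * r ^ 2 + (2 * k + m + 1) * r +
          Real.sqrt (r ^ 2 * (m - 1) ^ 2 - 4 * r * k ^ 2 - 4 * k * r * (m + r))) /
        (2 * (r + k) * (r + m + k)) ∨
    x = (2 * r ^ 2 + (2 * k + m + 1) * r -
          Real.sqrt (r ^ 2 * (m - 1) ^ 2 - 4 * r * k ^ 2 - 4 * k * r * (m + r))) /
        (2 * (r + k) * (r + m + k)) := by
  obtain ⟨hx1, hx2⟩ := hx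
  have hrk : (0:ℝ) < r + k := by linarith
  have hrmk : (0:ℝ) < r + m + k := by linarith
  have hxlt1 : x < 1 := lt_of_lt_of_le hx2 (by rw [div_le_one hrk]; linarith)
  have h1x : (0:ℝ) < 1 - x := by linarith
  have hden : (0:ℝ) < r - x * (k + r) := by
    have h := (lt_div_iff₀ hrk).mp hx2
    nlinarith [h]
  have hdne : r - x * (k + r) ≠ 0 := ne_of_gt hden
  have hpow : HasDerivAt (fun y : ℝ => (1 - y) ^ m) (m * (1 - x) ^ (m - 1) * (-1)) x := by
    have h1 : HasDerivAt (fun y : ℝ => 1 - y) (-1) x := by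
      simpa using (hasDerivAt_id x).const_sub 1
    exact (Real.hasStrictDerivAt_rpow_const (p := m) (Or.inl h1x.ne')).hasDerivAt.comp x h1
  have hnum : HasDerivAt (fun y : ℝ => r - y * (m + k + r)) (-(m + k + r)) x := by
    simpa using ((hasDerivAt_id x).mul_const (m + k + r)).const_sub r
  have hdenf : HasDerivAt (fun y : ℝ => r - y * (k + r)) (-(k + r)) x := by
    simpa using ((hasDerivAt_id x).mul_const (k + r)).const_sub r
  have hdiv : HasDerivAt (fun y : ℝ => (r - y * (m + k + r)) / (r - y * (k + r)))
      ((-(m + k + r) * (r - x * (k + r)) - (r - x * (m + k + r)) * (-(k + r))) /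
        (r - x * (k + r)) ^ 2) x := hnum.div hdenf hdne
  have htot := (hpow.mul hdiv).deriv
  change deriv (fun x : ℝ => (1 - x) ^ m * ((r - x * (m + k + r)) / (r - x * (k + r)))) x = _ at htot
  rw [hderiv] at htot
  have hsplit : (1 - x) ^ m = (1 - x) ^ (m - 1) * (1 - x) := by
    have h := Real.rpow_add h1x (m - 1) 1
    rw [sub_add_cancel, Real.rpow_one] at h
    exact h
  rw [hsplit] at htot
  have hP : (0:ℝ) < (1 - x) ^ (m - 1) := Real.rpow_pos_of_pos h1x _
  set P := (1 - x) ^ (m - 1) with hPdef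
  have hm0 : (0:ℝ) < m := by linarith
  have key : (r - x * (m + k + r)) * (r - x * (k + r)) + r * (1 - x) = 0 := by
    have h0 : P * m * ((r - x * (m + k + r)) * (r - x * (k + r)) + r * (1 - x)) = 0 := by
      have e : P * m * ((r - x * (m + k + r)) * (r - x * (k + r)) + r * (1 - x)) =
          -(m * P * (-1) * ((r - x * (m + k + r)) / (r - x * (k + r))) +
            P * (1 - x) * ((-(m + k + r) * (r - x * (k + r)) - (r - x * (m + k + r)) * (-(k + r))) /
              (r - x * (k + r)) ^ 2)) * (r - x * (k + r)) ^ 2 := by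
        field_simp
        ring
      rw [e, ← htot]
      simp
    rcases mul_eq_zero.mp h0 with h | h
    · exact absurd h (mul_ne_zero hP.ne' hm0.ne')
    · exact h
  set s := Real.sqrt (r ^ 2 * (m - 1) ^ 2 - 4 * r * k ^ 2 - 4 * k * r * (m + r)) with hsdef
  have hs2 : s ^ 2 = r ^ 2 * (m - 1) ^ 2 - 4 * r * k ^ 2 - 4 * k * r * (m + r) :=
    Real.sq_sqrt hD
  have hq : (2 * ((r + k) * (r + m + k)) * x - (2 * r ^ 2 + (2 * k + m + 1) * r)) ^ 2 = s ^ 2 := by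
    rw [hs2]
    linear_combination (4 * (r + k) * (r + m + k)) * key
  have hfac : (2 * ((r + k) * (r + m + k)) * x - (2 * r ^ 2 + (2 * k + m + 1) * r) - s) *
      (2 * ((r + k) * (r + m + k)) * x - (2 * r ^ 2 + (2 * k + m + 1) * r) + s) = 0 := by
    linear_combination hq
  have hA2 : (2 * (r + k) * (r + m + k)) ≠ 0 := by positivity
  rcases mul_eq_zero.mp hfac with h | h
  · left
    rw [eq_div_iff hA2]
    linear_combination h
  · right
    rw [eq_div_iff hA2]
    linear_combination h
end

section
/- Let n ≥ 2, and let 0 = y_0 < y_1 < ... < y_n = 1, positive weights p_1, ..., p_n summing to 1, m > 0, k > 0, r > 0. Define φ(x_1,...,x_n) = (Σ_i x_i^r (1-x_i)^{m+k} p_i) / (Σ_i x_i^r (1-x_i)^k p_i) for x_i ∈ [y_{i-1}, y_i] (with denominator positive). Then for any fixed x_2,...,x_n, the value of φ with x_1 = 0 is less than or equal to φ for any other x_1 ∈ [0, y_1]. -/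
open Real Set Finset

theorem first_coordinate_zero_minimizes
    (n : ℕ) (hn : 2 ≤ n) (y : Fin (n + 1) → ℝ) (hy : StrictMono y)
    (hy0 : y 0 = 0) (hyn : y (Fin.last n) = 1)
    (p : Fin n → ℝ) (hp : ∀ i, 0 < p i) (hpsum : ∑ i, p i = 1)
    (m k r : ℝ) (hm : 0 < m) (hk : 0 < k) (hr : 0 < r)
    (x : Fin n → ℝ) (hx : ∀ i : Fin n, x i ∈ Set.Icc (y i.castSucc) (y i.succ))
    (x' : Fin n → ℝ) (hx' : x' = Function.update x ⟨0, by omega⟩ 0)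
    (hden : 0 < ∑ i : Fin n, x' i ^ r * (1 - x' i) ^ k * p i) :
    (∑ i : Fin n, x' i ^ r * (1 - x' i) ^ (m + k) * p i) /
      (∑ i : Fin n, x' i ^ r * (1 - x' i) ^ k * p i) ≤
    (∑ i : Fin n, x i ^ r * (1 - x i) ^ (m + k) * p i) /
      (∑ i : Fin n, x i ^ r * (1 - x i) ^ k * p i) := by
  set i0 : Fin n := ⟨0, by omega⟩ with hi0
  have hx'0 : x' i0 = 0 := by rw [hx']; simp [i0]
  have hx'ne : ∀ i : Fin n, i ≠ i0 → x' i = x i := by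
    intro i hi; rw [hx']; exact Function.update_of_ne hi _ _
  -- basic bounds
  have hcast0 : (i0.castSucc : Fin (n+1)) = 0 := rfl
  have hx0nn : 0 ≤ x i0 := by
    have := (hx i0).1; rw [hcast0, hy0] at this; exact this
  have hx0lt1 : x i0 < 1 := by
    have h1 : x i0 ≤ y i0.succ := (hx i0).2
    have h2 : y i0.succ < y (Fin.last n) := by
      apply hy
      rw [Fin.lt_def]
      simp [Fin.last, i0]
      omega
    rw [hyn] at h2; linarith
  have hxi_nn : ∀ i : Fin n, 0 ≤ x i := by
    intro i
    have h1 := (hx i).1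
    have h2 : y 0 ≤ y i.castSucc := hy.monotone (Fin.zero_le _)
    rw [hy0] at h2; linarith
  have hxi_le1 : ∀ i : Fin n, x i ≤ 1 := by
    intro i
    have h1 := (hx i).2
    have h2 : y i.succ ≤ y (Fin.last n) := hy.monotone (Fin.le_last _)
    rw [hyn] at h2; linarith
  have hxi_ge : ∀ i : Fin n, i ≠ i0 → x i0 ≤ x i := by
    intro i hi
    have h1 : x i0 ≤ y i0.succ := (hx i0).2
    have h2 : y i0.succ ≤ y i.castSucc := by
      apply hy.monotone
      rw [Fin.le_def]
      have : i.val ≠ 0 := fun h => hi (Fin.ext h)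
      simp [i0, Fin.castSucc]
      omega
    have h3 := (hx i).1
    linarith
  -- split sums
  have hsplit : ∀ f : Fin n → ℝ, ∑ i, f i = f i0 + ∑ i ∈ Finset.univ.erase i0, f i :=
    fun f => (Finset.add_sum_erase _ f (Finset.mem_univ i0)).symm
  set S : ℝ := ∑ i ∈ Finset.univ.erase i0, x i ^ r * (1 - x i) ^ k * p i with hS
  set Sm : ℝ := ∑ i ∈ Finset.univ.erase i0, x i ^ r * (1 - x i) ^ (m + k) * p i with hSm
  set a : ℝ := x i0 ^ r * (1 - x i0) ^ k * p i0 with ha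
  have hx'S : ∑ i ∈ Finset.univ.erase i0, x' i ^ r * (1 - x' i) ^ k * p i = S := by
    apply Finset.sum_congr rfl
    intro i hi; rw [hx'ne i (Finset.ne_of_mem_erase hi)]
  have hx'Sm : ∑ i ∈ Finset.univ.erase i0, x' i ^ r * (1 - x' i) ^ (m + k) * p i = Sm := by
    apply Finset.sum_congr rfl
    intro i hi; rw [hx'ne i (Finset.ne_of_mem_erase hi)]
  have hzr : (0:ℝ) ^ r = 0 := Real.zero_rpow hr.ne'
  rw [hsplit (fun i => x' i ^ r * (1 - x' i) ^ k * p i)] at hden ⊢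
  rw [hsplit (fun i => x' i ^ r * (1 - x' i) ^ (m + k) * p i),
      hsplit (fun i => x i ^ r * (1 - x i) ^ k * p i),
      hsplit (fun i => x i ^ r * (1 - x i) ^ (m + k) * p i)]
  simp only [hx'0, hzr, zero_mul, zero_add, hx'S, hx'Sm] at hden ⊢
  -- key facts
  have h1x0 : 0 < 1 - x i0 := by linarith
  have hterm0 : x i0 ^ r * (1 - x i0) ^ (m + k) * p i0 = a * (1 - x i0) ^ m := by
    rw [ha, Real.rpow_add h1x0]; ring
  have ha_nn : 0 ≤ a := by
    apply mul_nonneg (mul_nonneg (Real.rpow_nonneg hx0nn _) (Real.rpow_nonneg h1x0.le _))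
    exact (hp i0).le
  have hc_nn : 0 ≤ (1 - x i0) ^ m := Real.rpow_nonneg h1x0.le _
  have hSm_le : Sm ≤ (1 - x i0) ^ m * S := by
    rw [hS, Finset.mul_sum]
    apply Finset.sum_le_sum
    intro i hi
    have hne := Finset.ne_of_mem_erase hi
    have h1 : (0:ℝ) ≤ 1 - x i := by linarith [hxi_le1 i]
    have hsp : (1 - x i) ^ (m + k) = (1 - x i) ^ m * (1 - x i) ^ k := by
      rw [Real.rpow_add' h1 (by linarith)]
    rw [hsp]
    have hmono : (1 - x i) ^ m ≤ (1 - x i0) ^ m :=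
      Real.rpow_le_rpow h1 (by linarith [hxi_ge i hne]) hm.le
    have hnn : 0 ≤ x i ^ r * (1 - x i) ^ k * p i :=
      mul_nonneg (mul_nonneg (Real.rpow_nonneg (hxi_nn i) _) (Real.rpow_nonneg h1 _)) (hp i).le
    calc x i ^ r * ((1 - x i) ^ m * (1 - x i) ^ k) * p i
        = (1 - x i) ^ m * (x i ^ r * (1 - x i) ^ k * p i) := by ring
      _ ≤ (1 - x i0) ^ m * (x i ^ r * (1 - x i) ^ k * p i) := by
          apply mul_le_mul_of_nonneg_right hmono
          exact mul_nonneg (mul_nonneg (Real.rpow_nonneg (hxi_nn i) _) (Real.rpow_nonneg h1 _)) (hp i).le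
  rw [hterm0]
  rw [div_le_div_iff₀ hden (by linarith)]
  rw [← hS, ← hSm, ← ha]
  nlinarith [mul_nonneg ha_nn (sub_nonneg.mpr hSm_le)]
end

section
/- For m > 0 and α ∈ (0,1), if k_β(r) satisfies Π_{i=1}^m (k_β + i)/(r + k_β + 1 + i) = 1 - α for each r > 0, then k_β(r)/r → (1-α)^{1/m} / (1 - (1-α)^{1/m}) as r → ∞. -/
open Real Filter Finset

private lemma aux_pow_le {m : ℕ} (hm : 0 < m) {x y : ℝ} (hx : 0 ≤ x)
    (h : x ^ m ≤ y) : x ≤ y ^ ((1 : ℝ) / m) := by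
  have hmne : (m : ℝ) ≠ 0 := Nat.cast_ne_zero.mpr hm.ne'
  have h1 : ((x ^ m : ℝ)) ^ ((1 : ℝ) / m) ≤ y ^ ((1 : ℝ) / m) :=
    Real.rpow_le_rpow (pow_nonneg hx m) h (by positivity)
  calc x = (x ^ m) ^ ((1 : ℝ) / m) := by
        rw [← Real.rpow_natCast x m, ← Real.rpow_mul hx, mul_one_div, div_self hmne,
          Real.rpow_one]
    _ ≤ y ^ ((1 : ℝ) / m) := h1

private lemma aux_le_pow {m : ℕ} (hm : 0 < m) {x y : ℝ} (hx : 0 ≤ x) (hy : 0 ≤ y)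
    (h : y ≤ x ^ m) : y ^ ((1 : ℝ) / m) ≤ x := by
  have hmne : (m : ℝ) ≠ 0 := Nat.cast_ne_zero.mpr hm.ne'
  have h1 : y ^ ((1 : ℝ) / m) ≤ ((x ^ m : ℝ)) ^ ((1 : ℝ) / m) :=
    Real.rpow_le_rpow hy h (by positivity)
  calc y ^ ((1 : ℝ) / m) ≤ (x ^ m) ^ ((1 : ℝ) / m) := h1
    _ = x := by
        rw [← Real.rpow_natCast x m, ← Real.rpow_mul hx, mul_one_div, div_self hmne,
          Real.rpow_one]

theorem beta_prior_demand_ratio_limit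
    (m : ℕ) (hm : 0 < m) (α : ℝ) (hα : α ∈ Set.Ioo (0 : ℝ) 1)
    (kβ : ℝ → ℝ) (hkβpos : ∀ r : ℝ, 0 < r → 0 < kβ r)
    (heq : ∀ r : ℝ, 0 < r →
      ∏ i ∈ Finset.Icc 1 m, (kβ r + (i : ℝ)) / (r + kβ r + 1 + (i : ℝ)) = 1 - α) :
    Tendsto (fun r : ℝ => kβ r / r) atTop
      (nhds ((1 - α) ^ ((1 : ℝ) / m) / (1 - (1 - α) ^ ((1 : ℝ) / m)))) := by
  obtain ⟨hα0, hα1⟩ := hα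
  set c : ℝ := (1 - α) ^ ((1 : ℝ) / m) with hc
  have h1α : 0 < 1 - α := by linarith
  have hc0 : 0 < c := Real.rpow_pos_of_pos h1α _
  have hc1 : c < 1 :=
    Real.rpow_lt_one h1α.le (by linarith) (by positivity)
  have h1c : 0 < 1 - c := by linarith
  have hm0 : (0 : ℝ) ≤ m := Nat.cast_nonneg m
  -- key bounds on kβ r / r for r > 0
  have key : ∀ r : ℝ, 0 < r →
      (c * r + (c * (1 + m) - m)) / (1 - c) / r ≤ kβ r / r ∧
      kβ r / r ≤ (c * r + (2 * c - 1)) / (1 - c) / r := by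
    intro r hr
    have hk := hkβpos r hr
    set k := kβ r with hkdef
    have hden : 0 < r + k + 2 := by linarith
    have hdenm : 0 < r + k + 1 + m := by linarith
    have hlow : ((k + 1) / (r + k + 2)) ^ m ≤ 1 - α := by
      rw [← heq r hr]
      calc ((k + 1) / (r + k + 2)) ^ m
          = ∏ _i ∈ Finset.Icc 1 m, ((k + 1) / (r + k + 2)) := by
            rw [Finset.prod_const, Nat.card_Icc]; norm_num
        _ ≤ ∏ i ∈ Finset.Icc 1 m, (k + (i : ℝ)) / (r + k + 1 + (i : ℝ)) := by
            apply Finset.prod_le_prod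
            · intro i _
              exact div_nonneg (by linarith) hden.le
            · intro i hi
              obtain ⟨hi1, him⟩ := Finset.mem_Icc.mp hi
              have hi1' : (1 : ℝ) ≤ i := by exact_mod_cast hi1
              have hdi : 0 < r + k + 1 + (i : ℝ) := by linarith
              rw [div_le_div_iff₀ hden hdi]
              nlinarith
    have hupp : 1 - α ≤ ((k + m) / (r + k + 1 + m)) ^ m := by
      rw [← heq r hr]
      calc ∏ i ∈ Finset.Icc 1 m, (k + (i : ℝ)) / (r + k + 1 + (i : ℝ))
          ≤ ∏ _i ∈ Finset.Icc 1 m, ((k + m) / (r + k + 1 + m)) := by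
            apply Finset.prod_le_prod
            · intro i hi
              obtain ⟨hi1, him⟩ := Finset.mem_Icc.mp hi
              have hi1' : (1 : ℝ) ≤ i := by exact_mod_cast hi1
              have hdi : 0 < r + k + 1 + (i : ℝ) := by linarith
              exact div_nonneg (by linarith) hdi.le
            · intro i hi
              obtain ⟨hi1, him⟩ := Finset.mem_Icc.mp hi
              have hi1' : (1 : ℝ) ≤ i := by exact_mod_cast hi1
              have him' : (i : ℝ) ≤ m := by exact_mod_cast him
              have hdi : 0 < r + k + 1 + (i : ℝ) := by linarith
              rw [div_le_div_iff₀ hdi hdenm]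
              nlinarith
        _ = ((k + m) / (r + k + 1 + m)) ^ m := by
            rw [Finset.prod_const, Nat.card_Icc]; norm_num
    have hA : (k + 1) / (r + k + 2) ≤ c :=
      aux_pow_le hm (div_nonneg (by linarith) hden.le) hlow
    have hB : c ≤ (k + m) / (r + k + 1 + m) :=
      aux_le_pow hm (div_nonneg (by linarith) hdenm.le) h1α.le hupp
    have hA' : k + 1 ≤ c * (r + k + 2) := (div_le_iff₀ hden).mp hA
    have hB' : c * (r + k + 1 + m) ≤ k + m := (le_div_iff₀ hdenm).mp hB
    constructor
    · apply (div_le_div_iff_of_pos_right hr).mpr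
      rw [div_le_iff₀ h1c]
      nlinarith
    · apply (div_le_div_iff_of_pos_right hr).mpr
      rw [le_div_iff₀ h1c]
      nlinarith
  -- the two bounding functions tend to c / (1 - c)
  have haux : ∀ b : ℝ, Tendsto (fun r : ℝ => (c * r + b) / (1 - c) / r) atTop
      (nhds (c / (1 - c))) := by
    intro b
    have h : Tendsto (fun r : ℝ => c / (1 - c) + (b / (1 - c)) * r⁻¹) atTop
        (nhds (c / (1 - c) + (b / (1 - c)) * 0)) :=
      tendsto_const_nhds.add (tendsto_const_nhds.mul tendsto_inv_atTop_zero)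
    rw [mul_zero, add_zero] at h
    apply h.congr'
    filter_upwards [eventually_ne_atTop (0 : ℝ)] with r hrne
    field_simp
  exact tendsto_of_tendsto_of_tendsto_of_le_of_le'
    (haux (c * (1 + m) - m)) (haux (2 * c - 1))
    (by filter_upwards [eventually_gt_atTop (0 : ℝ)] with r hr; exact (key r hr).1)
    (by filter_upwards [eventually_gt_atTop (0 : ℝ)] with r hr; exact (key r hr).2)
end

section
/- Let m > 0, a, b, c > 0 and 0 < x < y < z < 1. Then the function k ↦ (a(1-x)^{m+k} + b(1-y)^{m+k} + c(1-z)^{m+k})/(a(1-x)^k + b(1-y)^k + c(1-z)^k) is monotonically increasing in k > 0. -/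
open Real Set

lemma pair_ineq (p q m k1 k2 : ℝ) (hq : 0 < q) (hqp : q < p) (hm : 0 < m)
    (hk : k1 < k2) :
    p ^ (m + k1) * q ^ k2 + q ^ (m + k1) * p ^ k2 <
      p ^ (m + k2) * q ^ k1 + q ^ (m + k2) * p ^ k1 := by
  have hp : 0 < p := hq.trans hqp
  have e1 : p ^ (m + k1) = p ^ m * p ^ k1 := Real.rpow_add hp m k1
  have e2 : p ^ (m + k2) = p ^ m * p ^ k2 := Real.rpow_add hp m k2
  have e3 : q ^ (m + k1) = q ^ m * q ^ k1 := Real.rpow_add hq m k1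
  have e4 : q ^ (m + k2) = q ^ m * q ^ k2 := Real.rpow_add hq m k2
  have hPQ : q ^ m < p ^ m := Real.rpow_lt_rpow hq.le hqp hm
  have hd : q ^ (k2 - k1) < p ^ (k2 - k1) :=
    Real.rpow_lt_rpow hq.le hqp (by linarith)
  have eB : p ^ k2 = p ^ k1 * p ^ (k2 - k1) := by
    rw [← Real.rpow_add hp]; ring_nf
  have eD : q ^ k2 = q ^ k1 * q ^ (k2 - k1) := by
    rw [← Real.rpow_add hq]; ring_nf
  have hA : (0:ℝ) < p ^ k1 := Real.rpow_pos_of_pos hp k1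
  have hC : (0:ℝ) < q ^ k1 := Real.rpow_pos_of_pos hq k1
  have hBC : p ^ k1 * q ^ k2 < p ^ k2 * q ^ k1 := by
    rw [eB, eD]
    have := mul_lt_mul_of_pos_left hd (mul_pos hA hC)
    nlinarith
  rw [e1, e2, e3, e4]
  nlinarith [mul_pos hA hC]

theorem three_point_ratio_monotone (m a b c x y z : ℝ) (hm : 0 < m)
    (ha : 0 < a) (hb : 0 < b) (hc : 0 < c)
    (hx : 0 < x) (hxy : x < y) (hyz : y < z) (hz : z < 1) :
    StrictMonoOn (fun k : ℝ =>
        (a * (1 - x) ^ (m + k) + b * (1 - y) ^ (m + k) + c * (1 - z) ^ (m + k)) /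
        (a * (1 - x) ^ k + b * (1 - y) ^ k + c * (1 - z) ^ k)) (Set.Ioi (0 : ℝ)) := by
  intro k1 _ k2 _ hk
  set p := 1 - x with hp_def
  set q := 1 - y with hq_def
  set r := 1 - z with hr_def
  have hr : 0 < r := by simp [hr_def]; linarith
  have hq : 0 < q := by simp [hq_def]; linarith
  have hp : 0 < p := by simp [hp_def]; linarith
  have hrq : r < q := by simp [hq_def, hr_def]; linarith
  have hqp : q < p := by simp [hq_def, hp_def]; linarith
  have hden1 : 0 < a * p ^ k1 + b * q ^ k1 + c * r ^ k1 := by positivity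
  have hden2 : 0 < a * p ^ k2 + b * q ^ k2 + c * r ^ k2 := by positivity
  simp only
  rw [div_lt_div_iff₀ hden1 hden2]
  have h1 := pair_ineq p q m k1 k2 hq hqp hm hk
  have h2 := pair_ineq p r m k1 k2 hr (hrq.trans hqp) hm hk
  have h3 := pair_ineq q r m k1 k2 hr hrq hm hk
  have diag : ∀ s : ℝ, 0 < s → s ^ (m + k1) * s ^ k2 = s ^ (m + k2) * s ^ k1 := by
    intro s hs
    rw [← Real.rpow_add hs, ← Real.rpow_add hs]
    ring_nf
  have d1 := diag p hp
  have d2 := diag q hq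
  have d3 := diag r hr
  have D1 : a * a * (p ^ (m + k1) * p ^ k2) = a * a * (p ^ (m + k2) * p ^ k1) := by rw [d1]
  have D2 : b * b * (q ^ (m + k1) * q ^ k2) = b * b * (q ^ (m + k2) * q ^ k1) := by rw [d2]
  have D3 : c * c * (r ^ (m + k1) * r ^ k2) = c * c * (r ^ (m + k2) * r ^ k1) := by rw [d3]
  nlinarith [mul_lt_mul_of_pos_left h1 (mul_pos ha hb),
    mul_lt_mul_of_pos_left h2 (mul_pos ha hc),
    mul_lt_mul_of_pos_left h3 (mul_pos hb hc), D1, D2, D3]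
end

section
/- Let m, k, r > 0, x* := 1 - (φ*)^{1/m} for fixed φ* ∈ (0,1), and for each j let r_j → ∞ and k_j = k(r_j) be such that a_j := r_j/(r_j+k_j) → x̄ ∈ [0,1] with x̄ < x*. Let y*(j) ∈ (a_j, 1) be the unique solution of h_{r_j,k_j}(y) = φ* on (a_j, 1), where h_{r,k}(x) = (1-x)^m (r - x(r+m+k))/(r - x(r+k)). Then y*(j) → x* as j → ∞. -/
open Real Filter Set

theorem ystar_tendsto_xstar (m : ℝ) (hm : 0 < m) (φ : ℝ) (hφ : φ ∈ Set.Ioo (0 : ℝ) 1)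
    (r k : ℕ → ℝ) (hrpos : ∀ j, 0 < r j) (hkpos : ∀ j, 0 < k j)
    (hr : Tendsto r atTop atTop)
    (xbar : ℝ) (hxbar : xbar ∈ Set.Icc (0 : ℝ) 1)
    (ha : Tendsto (fun j => r j / (r j + k j)) atTop (nhds xbar))
    (hxbarlt : xbar < 1 - φ ^ ((1 : ℝ) / m))
    (ystar : ℕ → ℝ)
    (hy : ∀ j, ystar j ∈ Set.Ioo (r j / (r j + k j)) 1 ∧
      (1 - ystar j) ^ m *
        ((r j - ystar j * (r j + m + k j)) / (r j - ystar j * (r j + k j))) = φ) :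
    Tendsto ystar atTop (nhds (1 - φ ^ ((1 : ℝ) / m))) := by
  obtain ⟨hφ0, hφ1⟩ := hφ
  set c : ℝ := φ ^ ((1:ℝ)/m) with hc
  have hc0 : 0 < c := Real.rpow_pos_of_pos hφ0 _
  have hcm : c ^ m = φ := by
    rw [hc, ← Real.rpow_mul hφ0.le, one_div_mul_cancel hm.ne', Real.rpow_one]
  set F : ℕ → ℝ := fun j =>
    (r j - ystar j * (r j + m + k j)) / (r j - ystar j * (r j + k j)) with hF
  have hR : ∀ j, 0 < r j + k j := fun j => add_pos (hrpos j) (hkpos j)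
  have ha0 : ∀ j, 0 < r j / (r j + k j) := fun j => div_pos (hrpos j) (hR j)
  have hy0 : ∀ j, 0 < ystar j := fun j => (ha0 j).trans (hy j).1.1
  have hy1 : ∀ j, ystar j < 1 := fun j => (hy j).1.2
  have hrr : ∀ j, r j = (r j / (r j + k j)) * (r j + k j) :=
    fun j => (div_mul_cancel₀ _ (hR j).ne').symm
  have hDneg : ∀ j, r j - ystar j * (r j + k j) < 0 := by
    intro j
    have h1 := hrr j
    have h2 := (hy j).1.1
    nlinarith [hR j]
  have hF1 : ∀ j, 1 ≤ F j := by
    intro j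
    rw [hF]
    rw [le_div_iff_of_neg (hDneg j)]
    have := hy0 j
    nlinarith
  have hφF : ∀ j, (1 - ystar j) ^ m = φ / F j := by
    intro j
    have hne : F j ≠ 0 := by linarith [hF1 j]
    field_simp
    exact (hy j).2
  have hyx : ∀ j, 1 - c ≤ ystar j := by
    intro j
    by_contra h
    push_neg at h
    have h1 : c < 1 - ystar j := by linarith
    have h2 : φ < (1 - ystar j) ^ m := by
      calc φ = c ^ m := hcm.symm
        _ < (1 - ystar j) ^ m := Real.rpow_lt_rpow hc0.le h1 hm
    have h3 : (1 - ystar j) ^ m ≤ φ := by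
      rw [hφF j]
      have hne : (0:ℝ) < F j := by linarith [hF1 j]
      rw [div_le_iff₀ hne]
      nlinarith [mul_nonneg hφ0.le (sub_nonneg.mpr (hF1 j))]
    linarith
  set d : ℝ := (1 - c - xbar)/2 with hd
  have hd0 : 0 < d := by
    have : xbar < 1 - c := hxbarlt
    simp only [hd]; linarith
  have hFub : ∀ᶠ j in atTop, F j ≤ 1 + m / (r j * d) := by
    have hev : ∀ᶠ j in atTop, r j / (r j + k j) < xbar + d :=
      ha.eventually_lt_const (by linarith)
    filter_upwards [hev] with j hj
    have hya : d < ystar j - r j / (r j + k j) := by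
      have := hyx j
      linarith
    rw [hF, div_le_iff_of_neg (hDneg j)]
    have h1 := hrr j
    have h2 := hR j
    have h3 := hrpos j
    have h4 := hkpos j
    have h5 := hy0 j
    have h6 := hy1 j
    have hrd : 0 < r j * d := mul_pos h3 hd0
    have hDR : (r j + k j) * d < (r j + k j) * ystar j - r j := by
      have h7 := mul_lt_mul_of_pos_left hya h2
      nlinarith [h1]
    have hq : m / (r j * d) * (r j - ystar j * (r j + k j)) ≤ -(ystar j * m) := by
      rw [div_mul_eq_mul_div, div_le_iff₀ hrd]
      nlinarith [hDR, mul_pos hm hd0, mul_pos hm (mul_pos h3 hd0),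
        sub_pos.2 h6, mul_pos h4 (mul_pos hm hd0)]
    have hgoal : (1 + m / (r j * d)) * (r j - ystar j * (r j + k j)) =
        (r j - ystar j * (r j + k j)) + m / (r j * d) * (r j - ystar j * (r j + k j)) := by
      ring
    rw [hgoal]
    nlinarith [hq]
  have hFtend : Tendsto F atTop (nhds 1) := by
    have h0 : Tendsto (fun j => 1 + m/(r j * d)) atTop (nhds 1) := by
      have h1 : Tendsto (fun j => m/(r j * d)) atTop (nhds 0) :=
        Tendsto.div_atTop tendsto_const_nhds (hr.atTop_mul_const hd0)
      simpa using tendsto_const_nhds.add h1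
    exact tendsto_of_tendsto_of_tendsto_of_le_of_le' tendsto_const_nhds h0
      (Eventually.of_forall hF1) hFub
  have hpow : Tendsto (fun j => (1 - ystar j)^m) atTop (nhds φ) := by
    have h1 : Tendsto (fun j => φ / F j) atTop (nhds (φ/1)) :=
      tendsto_const_nhds.div hFtend one_ne_zero
    rw [div_one] at h1
    exact h1.congr fun j => (hφF j).symm
  have hfinal : Tendsto (fun j => 1 - ((1 - ystar j)^m)^((1:ℝ)/m)) atTop (nhds (1 - c)) :=
    tendsto_const_nhds.sub (hpow.rpow_const (Or.inl hφ0.ne'))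
  refine hfinal.congr fun j => ?_
  have h1 : (0:ℝ) ≤ 1 - ystar j := by linarith [hy1 j]
  rw [← Real.rpow_mul h1, mul_one_div_cancel hm.ne', Real.rpow_one, sub_sub_cancel]
end

section
/- Under the same hypotheses (r_j → ∞, a_j = r_j/(r_j+k_j) → x̄ ∈ [0,1], x̄ < x* = 1-(φ*)^{1/m}), the unique solution y**(j) ∈ (0, b_j) of h_{r_j,k_j}(y) = φ*, where b_j = r_j/(r_j+m+k_j), satisfies y**(j) → x̄ as j → ∞. -/
open Real Filter Set

theorem ystarstar_tendsto_xbar (m : ℝ) (hm : 0 < m) (φ : ℝ) (hφ : φ ∈ Set.Ioo (0 : ℝ) 1)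
    (r k : ℕ → ℝ) (hrpos : ∀ j, 0 < r j) (hkpos : ∀ j, 0 < k j)
    (hr : Tendsto r atTop atTop)
    (xbar : ℝ) (hxbar : xbar ∈ Set.Icc (0 : ℝ) 1)
    (ha : Tendsto (fun j => r j / (r j + k j)) atTop (nhds xbar))
    (hxbarlt : xbar < 1 - φ ^ ((1 : ℝ) / m))
    (ystarstar : ℕ → ℝ)
    (hy : ∀ j, ystarstar j ∈ Set.Ioo 0 (r j / (r j + m + k j)) ∧
      (1 - ystarstar j) ^ m *
        ((r j - ystarstar j * (r j + m + k j)) / (r j - ystarstar j * (r j + k j))) = φ) :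
    Tendsto ystarstar atTop (nhds xbar) := by
  have hφ0 := hφ.1
  have hφ1 := hφ.2
  have hx0 := hxbar.1
  have hx1 := hxbar.2
  -- P = (1-xbar)^m > φ
  have hpow : (0:ℝ) < φ ^ ((1:ℝ)/m) := Real.rpow_pos_of_pos hφ0 _
  have h1x : φ ^ ((1:ℝ)/m) < 1 - xbar := by linarith
  set P : ℝ := (1 - xbar) ^ m with hPdef
  have hP0 : 0 < P := Real.rpow_pos_of_pos (by linarith) m
  have hPφ : φ < P := by
    have h2 : (φ ^ ((1:ℝ)/m)) ^ m < (1 - xbar) ^ m :=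
      Real.rpow_lt_rpow hpow.le h1x hm
    have h3 : (φ ^ ((1:ℝ)/m)) ^ m = φ := by
      rw [← Real.rpow_mul hφ0.le]
      rw [one_div, inv_mul_cancel₀ hm.ne', Real.rpow_one]
    rwa [h3] at h2
  set c : ℝ := 1 - φ / P with hcdef
  have hc0 : 0 < c := by
    have : φ / P < 1 := (div_lt_one hP0).mpr hPφ
    simp only [hcdef]; linarith
  rw [Metric.tendsto_atTop]
  intro ε hε
  have E1 : ∀ᶠ j in atTop, r j / (r j + k j) < xbar + ε :=
    ha.eventually_lt_const (by linarith)
  have E2 : ∀ᶠ j in atTop, xbar - ε/2 < r j / (r j + k j) :=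
    ha.eventually_const_lt (by linarith)
  have E3 : ∀ᶠ j in atTop, 2 * m / (ε * c) < r j := hr.eventually_gt_atTop _
  obtain ⟨N, hN⟩ := (E1.and (E2.and E3)).exists_forall_of_atTop
  refine ⟨N, fun j hj => ?_⟩
  obtain ⟨h1, h2, h3⟩ := hN j hj
  obtain ⟨⟨hy0, hyb⟩, heq⟩ := hy j
  have hrj := hrpos j
  have hkj := hkpos j
  have hrk : 0 < r j + k j := by linarith
  have hrmk : 0 < r j + m + k j := by linarith
  rw [Real.dist_eq, abs_lt]
  constructor
  · -- lower bound: xbar - ε < y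
    by_contra hcon
    push_neg at hcon
    set y := ystarstar j with hydef
    have hyle : y ≤ xbar - ε := by simp only [hydef]; linarith
    have hylt1 : y < 1 := by linarith
    have ha2 : (xbar - ε/2) * (r j + k j) < r j := (lt_div_iff₀ hrk).mp h2
    set D : ℝ := r j - y * (r j + k j) with hDdef
    have hD : ε / 2 * r j ≤ D := by
      have hy' : y * (r j + k j) ≤ (xbar - ε) * (r j + k j) :=
        mul_le_mul_of_nonneg_right hyle hrk.le
      have : (xbar - ε/2) * (r j + k j) < r j := ha2
      nlinarith
    have hD0 : 0 < D := lt_of_lt_of_le (by positivity) hD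
    -- r > 2m/(εc) gives m/D < c * ... : show m / D < c
    have hrc : 2 * m / (ε * c) < r j := h3
    have hmD : m / D < c := by
      have h4 : 2 * m < r j * (ε * c) := by
        rw [div_lt_iff₀ (by positivity)] at hrc; linarith
      rw [div_lt_iff₀ hD0]
      have : c * (ε / 2 * r j) ≤ c * D := mul_le_mul_of_nonneg_left hD hc0.le
      nlinarith
    set Nn : ℝ := r j - y * (r j + m + k j) with hNdef
    have hND : Nn = D - y * m := by simp only [hNdef, hDdef]; ring
    have hNge : D - m ≤ Nn := by
      rw [hND]
      have : y * m ≤ 1 * m := mul_le_mul_of_nonneg_right hylt1.le hm.le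
      linarith
    have hfrac : φ / P < Nn / D := by
      have : (D - m) / D ≤ Nn / D := (div_le_div_iff_of_pos_right hD0).mpr hNge
      have h5 : (D - m) / D = 1 - m / D := by field_simp
      have : 1 - c < (D - m) / D := by rw [h5]; linarith
      simp only [hcdef] at this
      linarith
    have hpowy : P ≤ (1 - y) ^ m :=
      Real.rpow_le_rpow (by linarith) (by linarith) hm.le
    have hpowy0 : 0 < (1 - y) ^ m := Real.rpow_pos_of_pos (by linarith) m
    have : P * (φ / P) < (1 - y) ^ m * (Nn / D) :=
      mul_lt_mul' hpowy hfrac (by positivity) hpowy0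
    rw [mul_div_cancel₀ φ hP0.ne'] at this
    rw [heq] at this
    exact lt_irrefl φ this
  · -- upper bound: y < xbar + ε
    have hba : r j / (r j + m + k j) < r j / (r j + k j) :=
      div_lt_div_of_pos_left hrj hrk (by linarith)
    linarith
end
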